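/- arXiv:1511.03354 — 2 statements merged into one kernel-verified Lean document; each statement's English description precedes it below -/
import Mathlib

section
/- There is no probability measure ρ on the circle 𝕋 = ℝ/ℤ whose autocorrelation F_ρ equals the measure with density F(x) = 1 + cos(2πx) with respect to Haar measure, even though this measure F·Haar has total mass one, is nonnegative, has vanishing sine coefficients, and has nonnegative cosine coefficients. (Remark 3.4: the relaxed cone C strictly contains the set of autocorrelations of probabilities.) -/
open MeasureTheory Real
open scoped ENNReal

theorem cos2pi_periodic : Function.Periodic (fun t : ℝ => Real.cos (2 * Real.pi * t)) 1 := by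
  intro x; simp [mul_add, Real.cos_add_two_pi]

theorem sin2pi_periodic : Function.Periodic (fun t : ℝ => Real.sin (2 * Real.pi * t)) 1 := by
  intro x; simp [mul_add, Real.sin_add_two_pi]

/-- The function `x ↦ cos (2π x)` on the circle `ℝ/ℤ`. -/
noncomputable def cosA : AddCircle (1 : ℝ) → ℝ := cos2pi_periodic.lift

/-- The function `x ↦ sin (2π x)` on the circle `ℝ/ℤ`. -/
noncomputable def sinA : AddCircle (1 : ℝ) → ℝ := sin2pi_periodic.lift

/-- The `d`-dimensional torus `𝕋^d = ℝ^d/ℤ^d`, with its Haar probability measure `volume`. -/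
abbrev Torus (d : ℕ) := Fin d → AddCircle (1 : ℝ)

/-- `cos (2π k·x)` for `k ∈ ℤ^d` and `x ∈ 𝕋^d`. -/
noncomputable def tcos {d : ℕ} (k : Fin d → ℤ) (x : Torus d) : ℝ := cosA (∑ i, k i • x i)

/-- `sin (2π k·x)` for `k ∈ ℤ^d` and `x ∈ 𝕋^d`. -/
noncomputable def tsin {d : ℕ} (k : Fin d → ℤ) (x : Torus d) : ℝ := sinA (∑ i, k i • x i)

/-- `cos (2π k x)` on the circle `𝕋 = ℝ/ℤ`. -/
noncomputable def cosC (k : ℤ) (x : AddCircle (1 : ℝ)) : ℝ := cosA (k • x)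

/-- `sin (2π k x)` on the circle `𝕋 = ℝ/ℤ`. -/
noncomputable def sinC (k : ℤ) (x : AddCircle (1 : ℝ)) : ℝ := sinA (k • x)

/-- The autocorrelation of a measure `ρ` on the circle `𝕋`: the pushforward of `ρ × ρ`
under `(x, y) ↦ x - y`. -/
noncomputable def autocorrC (ρ : Measure (AddCircle (1 : ℝ))) : Measure (AddCircle (1 : ℝ)) :=
  (ρ.prod ρ).map (fun p => p.1 - p.2)

/-- The measure on the circle with density `1 + cos(2πx)` with respect to Haar measure. -/
noncomputable def F3 : Measure (AddCircle (1 : ℝ)) :=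
  volume.withDensity (fun x => ENNReal.ofReal (1 + cosC 1 x))

/-!
The `n`-th Fourier coefficient of the autocorrelation of `ρ` is `|ρ̂(n)|²`, so if `F_ρ` had
density `1 + cos 2πx` then `|ρ̂(1)|² = 1/2` and `ρ̂(2) = ρ̂(3) = 0`. This contradicts the
positive semidefiniteness of the Toeplitz matrix `(ρ̂(i - j))_{0 ≤ i, j ≤ 3}` of a probability
measure: with `a = ρ̂(1)`, the vector `(1, -2ā, 2ā², -2ā³)` gives the quadratic form the value
`1 - 4|a|⁴ - 4|a|⁶ = -1/2`.
-/

open scoped ComplexConjugate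

local notation "𝕋" => AddCircle (1 : ℝ)

section TrigMoment

variable {T : ℝ}

/-- `μ̂(n) = ∫ e^{2πinx/T} dμ(x)`: the sign is opposite to that of `fourierCoeff`. -/
noncomputable def trigMoment (μ : Measure (AddCircle T)) (n : ℤ) : ℂ :=
  ∫ x, fourier n x ∂μ

lemma fourier_sub_apply (n : ℤ) (x y : AddCircle T) :
    fourier n (x - y) = fourier n x * conj (fourier n y) := by
  rw [← fourier_neg, fourier_apply, fourier_apply, fourier_apply, neg_zsmul, smul_sub,
    sub_eq_add_neg, AddCircle.toCircle_add, Circle.coe_mul]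

lemma fourier_mul_conj_fourier (m n : ℤ) (x : AddCircle T) :
    fourier m x * conj (fourier n x) = fourier (m - n) x := by
  rw [← fourier_neg, ← fourier_add, sub_eq_add_neg]

lemma trigMoment_neg (μ : Measure (AddCircle T)) (n : ℤ) :
    trigMoment μ (-n) = conj (trigMoment μ n) := by
  simp only [trigMoment, fourier_neg, integral_conj]

lemma trigMoment_zero (μ : Measure (AddCircle T)) [IsProbabilityMeasure μ] :
    trigMoment μ 0 = 1 := by
  simp [trigMoment]

variable [Fact (0 < T)]

lemma integrable_fourier (μ : Measure (AddCircle T)) [IsFiniteMeasure μ] (n : ℤ) :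
    Integrable (fourier n) μ :=
  (fourier n).continuous.integrable_of_hasCompactSupport (.of_compactSpace _)

lemma trigMoment_haarAddCircle (n : ℤ) :
    trigMoment (AddCircle.haarAddCircle (T := T)) n = if n = 0 then 1 else 0 := by
  split_ifs with hn
  · simp [trigMoment, hn]
  · exact integral_eq_zero_of_add_right_eq_neg (fourier_add_half_inv_index hn Fact.out)

lemma sum_mul_conj_mul_trigMoment {ι : Type*} [Fintype ι] (μ : Measure (AddCircle T))
    [IsFiniteMeasure μ] (c : ι → ℂ) (k : ι → ℤ) :
    ∑ i, ∑ j, c i * conj (c j) * trigMoment μ (k i - k j)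
      = ((∫ x, ‖∑ i, c i * fourier (k i) x‖ ^ 2 ∂μ : ℝ) : ℂ) := by
  have hint : ∀ i j, Integrable (fun x ↦ c i * conj (c j) * fourier (k i - k j) x) μ :=
    fun i j ↦ (integrable_fourier μ _).const_mul _
  have hpoint : ∀ x : AddCircle T, ((‖∑ i, c i * fourier (k i) x‖ ^ 2 : ℝ) : ℂ)
      = ∑ i, ∑ j, c i * conj (c j) * fourier (k i - k j) x := by
    intro x
    rw [Complex.ofReal_pow, ← Complex.mul_conj', map_sum, Finset.sum_mul_sum]
    simp only [map_mul, ← fourier_mul_conj_fourier]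
    exact Finset.sum_congr rfl fun i _ ↦ Finset.sum_congr rfl fun j _ ↦ by ring
  rw [← integral_complex_ofReal]
  simp_rw [hpoint]
  rw [integral_finsetSum _ fun i _ ↦ integrable_finsetSum _ fun j _ ↦ hint i j]
  simp_rw [integral_finsetSum _ fun j _ ↦ hint _ j, integral_const_mul, trigMoment]

lemma re_sum_mul_conj_mul_trigMoment_nonneg {ι : Type*} [Fintype ι] (μ : Measure (AddCircle T))
    [IsFiniteMeasure μ] (c : ι → ℂ) (k : ι → ℤ) :
    0 ≤ (∑ i, ∑ j, c i * conj (c j) * trigMoment μ (k i - k j)).re := by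
  rw [sum_mul_conj_mul_trigMoment, Complex.ofReal_re]
  exact integral_nonneg fun x ↦ by positivity

theorem four_mul_norm_trigMoment_one_pow_le_one (μ : Measure (AddCircle T))
    [IsProbabilityMeasure μ] (h2 : trigMoment μ 2 = 0) (h3 : trigMoment μ 3 = 0) :
    4 * ‖trigMoment μ 1‖ ^ 4 + 4 * ‖trigMoment μ 1‖ ^ 6 ≤ 1 := by
  set a := trigMoment μ 1 with ha
  let c : Fin 4 → ℂ := ![1, -2 * conj a, 2 * conj a ^ 2, -2 * conj a ^ 3]
  let k : Fin 4 → ℤ := ![0, 1, 2, 3]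
  have hform : ∑ i, ∑ j, c i * conj (c j) * trigMoment μ (k i - k j)
      = ((1 - 4 * ‖a‖ ^ 4 - 4 * ‖a‖ ^ 6 : ℝ) : ℂ) := by
    simp only [c, k, Fin.sum_univ_four, Fin.isValue, Matrix.cons_val_zero, Matrix.cons_val_one,
      Matrix.cons_val, map_one, map_neg, map_mul, map_pow, map_ofNat, Complex.conj_conj,
      Int.reduceSub, Int.reduceNeg, sub_zero, zero_sub, sub_self, trigMoment_neg, ← ha,
      trigMoment_zero, h2, h3, map_zero, mul_zero, add_zero, zero_add, Complex.ofReal_sub,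
      Complex.ofReal_one, Complex.ofReal_mul, Complex.ofReal_ofNat, Complex.ofReal_pow]
    set p := a * conj a
    linear_combination (-4 * (p + (‖a‖ : ℂ) ^ 2) - 4 * (p ^ 2 + p * ‖a‖ ^ 2 + ‖a‖ ^ 4)) *
      Complex.mul_conj' a
  have hnonneg := re_sum_mul_conj_mul_trigMoment_nonneg μ c k
  rw [hform, Complex.ofReal_re] at hnonneg
  linarith

end TrigMoment

lemma trigMoment_volume (n : ℤ) :
    trigMoment (volume : Measure 𝕋) n = if n = 0 then 1 else 0 := by
  rw [← trigMoment_haarAddCircle (T := 1)]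
  simp [AddCircle.volume_eq_smul_haarAddCircle]

lemma fourier_apply_eq_cosC_add_sinC_mul_I (k : ℤ) (x : 𝕋) :
    fourier k x = cosC k x + sinC k x * Complex.I := by
  induction x using QuotientAddGroup.induction_on with
  | H r =>
    have hkr : k • (r : 𝕋) = ((k * r : ℝ) : 𝕋) := by
      rw [← QuotientAddGroup.mk_zsmul, zsmul_eq_mul]
    rw [cosC, sinC, hkr, cosA, sinA, Function.Periodic.lift_coe, Function.Periodic.lift_coe,
      fourier_coe_apply, Complex.ofReal_cos, Complex.ofReal_sin, ← Complex.exp_mul_I]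
    push_cast
    ring_nf

lemma cosC_eq_re_fourier (k : ℤ) (x : 𝕋) : cosC k x = (fourier k x).re := by
  rw [fourier_apply_eq_cosC_add_sinC_mul_I]
  simp

lemma sinC_eq_im_fourier (k : ℤ) (x : 𝕋) : sinC k x = (fourier k x).im := by
  rw [fourier_apply_eq_cosC_add_sinC_mul_I]
  simp

lemma continuous_cosC (k : ℤ) : Continuous (cosC k) := by
  rw [funext (cosC_eq_re_fourier k)]
  exact Complex.continuous_re.comp (fourier k).continuous

lemma integral_cosC (μ : Measure 𝕋) [IsFiniteMeasure μ] (k : ℤ) :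
    ∫ x, cosC k x ∂μ = (trigMoment μ k).re := by
  simp_rw [trigMoment, cosC_eq_re_fourier]
  exact integral_re (integrable_fourier μ k)

lemma integral_sinC (μ : Measure 𝕋) [IsFiniteMeasure μ] (k : ℤ) :
    ∫ x, sinC k x ∂μ = (trigMoment μ k).im := by
  simp_rw [trigMoment, sinC_eq_im_fourier]
  exact integral_im (integrable_fourier μ k)

lemma ofReal_cosC_one (x : 𝕋) : (cosC 1 x : ℂ) = (fourier 1 x + fourier (-1) x) / 2 := by
  rw [fourier_neg, Complex.add_conj, cosC_eq_re_fourier]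
  push_cast
  ring

lemma one_add_cosC_one_nonneg (x : 𝕋) : 0 ≤ 1 + cosC 1 x := by
  have h := (Complex.abs_re_le_norm (fourier 1 x)).trans ((fourier 1).norm_coe_le_norm x)
  rw [fourier_norm, ← cosC_eq_re_fourier] at h
  linarith [neg_abs_le (cosC 1 x)]

lemma F3_univ : F3 Set.univ = 1 := by
  have hcos : Integrable (cosC 1) :=
    (continuous_cosC 1).integrable_of_hasCompactSupport (.of_compactSpace _)
  have hint : Integrable (fun x : 𝕋 ↦ 1 + cosC 1 x) := (integrable_const 1).add hcos
  rw [F3, withDensity_apply _ MeasurableSet.univ, setLIntegral_univ,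
    ← ofReal_integral_eq_lintegral_ofReal hint (.of_forall one_add_cosC_one_nonneg),
    integral_add (integrable_const 1) hcos, integral_cosC, trigMoment_volume]
  simp

instance : IsProbabilityMeasure F3 := ⟨F3_univ⟩

lemma trigMoment_F3 (n : ℤ) :
    trigMoment F3 n = trigMoment (volume : Measure 𝕋) n
      + (trigMoment (volume : Measure 𝕋) (n + 1) + trigMoment (volume : Measure 𝕋) (n - 1))
        / 2 := by
  have hmeas : Measurable fun x : 𝕋 ↦ ENNReal.ofReal (1 + cosC 1 x) :=
    (continuous_const.add (continuous_cosC 1)).measurable.ennreal_ofReal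
  have hdensity : ∀ x : 𝕋, (ENNReal.ofReal (1 + cosC 1 x)).toReal • fourier n x
      = fourier n x + (fourier (n + 1) x + fourier (n - 1) x) / 2 := by
    intro x
    rw [ENNReal.toReal_ofReal (one_add_cosC_one_nonneg x), Complex.real_smul, Complex.ofReal_add,
      ofReal_cosC_one, fourier_add, sub_eq_add_neg, fourier_add]
    push_cast
    ring
  rw [trigMoment, F3, integral_withDensity_eq_integral_toReal_smul hmeas
    (.of_forall fun _ ↦ ENNReal.ofReal_lt_top)]
  simp_rw [hdensity]
  rw [integral_add (g := fun x ↦ (fourier (n + 1) x + fourier (n - 1) x) / 2)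
    (integrable_fourier _ n) (((integrable_fourier _ _).add (integrable_fourier _ _)).div_const 2),
    integral_div, integral_add (integrable_fourier _ _) (integrable_fourier _ _)]
  rfl

lemma trigMoment_autocorrC (ρ : Measure 𝕋) [IsFiniteMeasure ρ] (n : ℤ) :
    trigMoment (autocorrC ρ) n = (‖trigMoment ρ n‖ ^ 2 : ℝ) := by
  rw [trigMoment, autocorrC, integral_map (by fun_prop) (fourier n).continuous.aestronglyMeasurable]
  simp_rw [fourier_sub_apply, ← fourier_neg]
  rw [integral_prod_mul (fun x ↦ fourier n x) (fun y ↦ fourier (-n) y), Complex.ofReal_pow,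
    ← Complex.mul_conj', ← trigMoment_neg]
  rfl

theorem not_exists_autocorrC_eq_F3 :
    ¬ ∃ ρ : Measure 𝕋, IsProbabilityMeasure ρ ∧ autocorrC ρ = F3 := by
  rintro ⟨ρ, hρ, hF⟩
  have hmoment : ∀ n, (‖trigMoment ρ n‖ ^ 2 : ℝ) = trigMoment F3 n := fun n ↦ by
    rw [← trigMoment_autocorrC, hF]
  have h1 : ‖trigMoment ρ 1‖ ^ 2 = 2⁻¹ := Complex.ofReal_injective <| by
    norm_num [hmoment, trigMoment_F3, trigMoment_volume]
  have h2 : trigMoment ρ 2 = 0 := by simpa [trigMoment_F3, trigMoment_volume] using hmoment 2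
  have h3 : trigMoment ρ 3 = 0 := by simpa [trigMoment_F3, trigMoment_volume] using hmoment 3
  have hbound := four_mul_norm_trigMoment_one_pow_le_one ρ h2 h3
  rw [show 4 = 2 * 2 by rfl, show 6 = 2 * 3 by rfl, pow_mul, pow_mul, h1] at hbound
  norm_num at hbound

/-- Remark 3.4: the measure with density `1 + cos(2πx)` has total mass one, vanishing sine
coefficients and nonnegative cosine coefficients (it is nonnegative, being a measure), yet it
is not the autocorrelation of any probability measure on the circle. -/
theorem stmt3 :
    F3 Set.univ = 1 ∧
      (∀ k : ℤ, k ≠ 0 → (∫ x, sinC k x ∂F3) = 0 ∧ 0 ≤ ∫ x, cosC k x ∂F3) ∧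
      ¬ ∃ ρ : Measure (AddCircle (1 : ℝ)), IsProbabilityMeasure ρ ∧ autocorrC ρ = F3 := by
  refine ⟨F3_univ, fun k _ ↦ ?_, not_exists_autocorrC_eq_F3⟩
  rw [integral_sinC, integral_cosC, trigMoment_F3]
  simp only [trigMoment_volume]
  constructor <;> split_ifs <;> norm_num
end

section
/- Dual lower bound (Proposition 5.1, item 2): let W : 𝕋^d → ℝ be continuous and suppose W admits an admissible dual decomposition W(x) = W⁺(x) + K(x) + 2c. Then for every measure F in the relaxed cone C, (1/2)∫ W dF ≥ c. In particular c is a lower bound for the minimum of the pairwise energy E over probability measures on 𝕋^d. -/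
open MeasureTheory Real
open scoped ENNReal

/-- The autocorrelation of a measure `ρ` on `𝕋^d`: the pushforward of `ρ × ρ`
under `(x, y) ↦ x - y`. -/
noncomputable def autocorr {d : ℕ} (ρ : Measure (Torus d)) : Measure (Torus d) :=
  (ρ.prod ρ).map (fun p => p.1 - p.2)

/-- The relaxed cone `C`: nonnegative measures on `𝕋^d` of total mass one with vanishing
sine coefficients and nonnegative cosine coefficients for all `k ≠ 0`. -/
def inCone {d : ℕ} (F : Measure (Torus d)) : Prop :=
  F Set.univ = 1 ∧ ∀ k : Fin d → ℤ, k ≠ 0 →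
    (∫ x, tsin k x ∂F) = 0 ∧ 0 ≤ ∫ x, tcos k x ∂F

/-- The pairwise interaction energy `E(ρ) = (1/2) ∫∫ W(x - y) dρ(x) dρ(y)`. -/
noncomputable def energy {d : ℕ} (W : Torus d → ℝ) (ρ : Measure (Torus d)) : ℝ :=
  (1/2) * ∫ x, ∫ y, W (x - y) ∂ρ ∂ρ

/-!
Integrating `W = W⁺ + K + 2c` against `F ∈ C` gives
`∫ W dF = ∫ W⁺ dF + ∑ a_k F̂_c(k) + 2c` (termwise integration is licensed by `∑ a_k < ∞`),
and every term but `2c` is nonnegative. For a probability measure `ρ`, `E(ρ)` is half the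
integral of `W` against the autocorrelation of `ρ`, whose sine coefficients vanish and whose
cosine coefficients are `ρ̂_c(k)² + ρ̂_s(k)² ≥ 0`; so the autocorrelation lies in `C`.
-/

lemma cosA_coe (t : ℝ) : cosA (t : AddCircle (1 : ℝ)) = Real.cos (2 * π * t) :=
  cos2pi_periodic.lift_coe t

lemma sinA_coe (t : ℝ) : sinA (t : AddCircle (1 : ℝ)) = Real.sin (2 * π * t) :=
  sin2pi_periodic.lift_coe t

lemma continuous_cosA : Continuous cosA :=
  Continuous.quotient_liftOn' (by fun_prop) _

lemma continuous_sinA : Continuous sinA :=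
  Continuous.quotient_liftOn' (by fun_prop) _

lemma abs_cosA_le_one (z : AddCircle (1 : ℝ)) : |cosA z| ≤ 1 := by
  induction z using QuotientAddGroup.induction_on with
  | H t => rw [cosA_coe]; exact abs_cos_le_one _

lemma cosA_sub (x y : AddCircle (1 : ℝ)) :
    cosA (x - y) = cosA x * cosA y + sinA x * sinA y := by
  induction x using QuotientAddGroup.induction_on with
  | H s =>
    induction y using QuotientAddGroup.induction_on with
    | H t =>
      rw [← QuotientAddGroup.mk_sub]
      simp only [cosA_coe, sinA_coe, mul_sub, cos_sub]

lemma sinA_sub (x y : AddCircle (1 : ℝ)) :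
    sinA (x - y) = sinA x * cosA y - cosA x * sinA y := by
  induction x using QuotientAddGroup.induction_on with
  | H s =>
    induction y using QuotientAddGroup.induction_on with
    | H t =>
      rw [← QuotientAddGroup.mk_sub]
      simp only [cosA_coe, sinA_coe, mul_sub, sin_sub]

section TorusCharacters

variable {d : ℕ} (k : Fin d → ℤ)

lemma continuous_tcos : Continuous (tcos k) :=
  continuous_cosA.comp (by fun_prop)

lemma continuous_tsin : Continuous (tsin k) :=
  continuous_sinA.comp (by fun_prop)

lemma abs_tcos_le_one (x : Torus d) : |tcos k x| ≤ 1 :=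
  abs_cosA_le_one _

lemma sum_zsmul_sub (x y : Torus d) :
    ∑ i, k i • (x - y) i = ∑ i, k i • x i - ∑ i, k i • y i := by
  simp only [Pi.sub_apply, zsmul_sub, Finset.sum_sub_distrib]

lemma tcos_sub (x y : Torus d) :
    tcos k (x - y) = tcos k x * tcos k y + tsin k x * tsin k y := by
  simp only [tcos, tsin, sum_zsmul_sub, cosA_sub]

lemma tsin_sub (x y : Torus d) :
    tsin k (x - y) = tsin k x * tcos k y - tcos k x * tsin k y := by
  simp only [tcos, tsin, sum_zsmul_sub, sinA_sub]

end TorusCharacters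

lemma integrable_of_continuous_of_compactSpace {X : Type*} [TopologicalSpace X] [CompactSpace X]
    [MeasurableSpace X] [OpensMeasurableSpace X] {μ : Measure X} [IsFiniteMeasure μ]
    {f : X → ℝ} (hf : Continuous f) : Integrable f μ :=
  hf.integrable_of_hasCompactSupport (.of_compactSpace f)

lemma integral_tsum_mul_of_abs_le_one {α ι : Type*} [MeasurableSpace α] [Countable ι]
    {μ : Measure α} [IsFiniteMeasure μ] {f : ι → α → ℝ} {a : ι → ℝ}
    (hf_meas : ∀ i, AEStronglyMeasurable (f i) μ) (hf_le : ∀ i x, |f i x| ≤ 1)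
    (ha : Summable fun i => |a i|) :
    ∫ x, ∑' i, a i * f i x ∂μ = ∑' i, a i * ∫ x, f i x ∂μ := by
  have hbound : ∀ i x, ‖a i * f i x‖ ≤ |a i| := fun i x => by
    simpa [abs_mul] using mul_le_mul_of_nonneg_left (hf_le i x) (abs_nonneg (a i))
  have hint : ∀ i, Integrable (fun x => a i * f i x) μ := fun i =>
    .of_bound ((hf_meas i).const_mul _) _ (.of_forall (hbound i))
  have hsum : Summable fun i => ∫ x, ‖a i * f i x‖ ∂μ := by
    refine (ha.mul_right (μ.real Set.univ)).of_nonneg_of_le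
      (fun i => integral_nonneg fun _ => norm_nonneg _) fun i => ?_
    calc ∫ x, ‖a i * f i x‖ ∂μ ≤ ‖∫ x, ‖a i * f i x‖ ∂μ‖ := Real.le_norm_self _
      _ ≤ |a i| * μ.real Set.univ :=
        norm_integral_le_of_norm_le_const
          (.of_forall fun x => (norm_norm _).trans_le (hbound i x))
  rw [← integral_tsum_of_summable_integral_norm hint hsum]
  simp only [integral_const_mul]

lemma inCone.isProbabilityMeasure {d : ℕ} {F : Measure (Torus d)} (hF : inCone F) :
    IsProbabilityMeasure F :=
  ⟨hF.1⟩

lemma inCone.integral_tcos_nonneg {d : ℕ} {F : Measure (Torus d)} (hF : inCone F)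
    (k : Fin d → ℤ) : 0 ≤ ∫ x, tcos k x ∂F := by
  rcases eq_or_ne k 0 with rfl | hk
  · refine integral_nonneg fun x => ?_
    simp only [tcos, Pi.zero_apply, zero_smul, Finset.sum_const_zero]
    rw [← AddCircle.coe_zero, cosA_coe]
    simp
  · exact (hF.2 k hk).2

lemma inCone.integral_cosineSeries_nonneg {d : ℕ} {F : Measure (Torus d)} (hF : inCone F)
    {a : (Fin d → ℤ) → ℝ} (ha_nonneg : ∀ k, 0 ≤ a k) (ha_sum : Summable a) :
    0 ≤ ∫ x, ∑' k, a k * tcos k x ∂F := by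
  have := hF.isProbabilityMeasure
  rw [integral_tsum_mul_of_abs_le_one (fun k => (continuous_tcos k).aestronglyMeasurable)
    abs_tcos_le_one (ha_sum.congr fun k => (abs_of_nonneg (ha_nonneg k)).symm)]
  exact tsum_nonneg fun k => mul_nonneg (ha_nonneg k) (hF.integral_tcos_nonneg k)

theorem le_half_integral_of_decomposition {d : ℕ} {F : Measure (Torus d)} (hF : inCone F)
    {W Wp : Torus d → ℝ} {a : (Fin d → ℤ) → ℝ} {c : ℝ}
    (hWc : Continuous W) (hWpc : Continuous Wp) (hWp : ∀ x, 0 ≤ Wp x)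
    (ha_nonneg : ∀ k, 0 ≤ a k) (ha_sum : Summable a)
    (hdecomp : ∀ x, W x = Wp x + (∑' k : Fin d → ℤ, a k * tcos k x) + 2 * c) :
    c ≤ (1/2) * ∫ x, W x ∂F := by
  have := hF.isProbabilityMeasure
  set K : Torus d → ℝ := fun x => ∑' k, a k * tcos k x
  have hK : K = fun x => W x - Wp x - 2 * c := funext fun x => by rw [hdecomp x]; ring
  have hWp_int : Integrable Wp F := integrable_of_continuous_of_compactSpace hWpc
  have hK_int : Integrable K F :=
    integrable_of_continuous_of_compactSpace (by rw [hK]; fun_prop)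
  have hsplit : ∫ x, W x ∂F = ∫ x, Wp x ∂F + ∫ x, K x ∂F + 2 * c := by
    have hsum_int : Integrable (fun x => Wp x + K x) F := hWp_int.add hK_int
    rw [integral_congr_ae (.of_forall hdecomp), integral_add hsum_int (integrable_const _),
      integral_add hWp_int hK_int]
    simp
  have hWp_nonneg : 0 ≤ ∫ x, Wp x ∂F := integral_nonneg hWp
  have hK_nonneg : 0 ≤ ∫ x, K x ∂F := hF.integral_cosineSeries_nonneg ha_nonneg ha_sum
  linarith

section Autocorrelation

variable {d : ℕ} (ρ : Measure (Torus d))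

instance [IsProbabilityMeasure ρ] : IsProbabilityMeasure (autocorr ρ) :=
  Measure.isProbabilityMeasure_map measurable_sub.aemeasurable

lemma integral_autocorr {g : Torus d → ℝ} (hg : Continuous g) :
    ∫ x, g x ∂autocorr ρ = ∫ p, g (p.1 - p.2) ∂ρ.prod ρ :=
  integral_map measurable_sub.aemeasurable hg.aestronglyMeasurable

variable [IsFiniteMeasure ρ]

lemma energy_eq_half_integral_autocorr {W : Torus d → ℝ} (hW : Continuous W) :
    energy W ρ = (1/2) * ∫ x, W x ∂autocorr ρ := by
  rw [energy, integral_autocorr ρ hW,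
    integral_prod _ (integrable_of_continuous_of_compactSpace (by fun_prop))]

lemma integrable_prod_mul_of_continuous {f g : Torus d → ℝ} (hf : Continuous f)
    (hg : Continuous g) : Integrable (fun p : Torus d × Torus d => f p.1 * g p.2) (ρ.prod ρ) :=
  integrable_of_continuous_of_compactSpace (by fun_prop)

lemma integral_tsin_autocorr (k : Fin d → ℤ) : ∫ x, tsin k x ∂autocorr ρ = 0 := by
  have hs := continuous_tsin k
  have hc := continuous_tcos k
  simp only [integral_autocorr ρ hs, tsin_sub]
  rw [integral_sub (integrable_prod_mul_of_continuous ρ hs hc)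
    (integrable_prod_mul_of_continuous ρ hc hs), integral_prod_mul, integral_prod_mul]
  ring

lemma integral_tcos_autocorr (k : Fin d → ℤ) :
    ∫ x, tcos k x ∂autocorr ρ = (∫ x, tcos k x ∂ρ) ^ 2 + (∫ x, tsin k x ∂ρ) ^ 2 := by
  have hs := continuous_tsin k
  have hc := continuous_tcos k
  simp only [integral_autocorr ρ hc, tcos_sub]
  rw [integral_add (integrable_prod_mul_of_continuous ρ hc hc)
    (integrable_prod_mul_of_continuous ρ hs hs), integral_prod_mul, integral_prod_mul]
  ring

lemma inCone_autocorr [IsProbabilityMeasure ρ] : inCone (autocorr ρ) :=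
  ⟨measure_univ, fun k _ => ⟨integral_tsin_autocorr ρ k, by
    rw [integral_tcos_autocorr]; positivity⟩⟩

end Autocorrelation

theorem stmt8_general {d : ℕ} (W Wp : Torus d → ℝ) (a : (Fin d → ℤ) → ℝ) (c : ℝ)
    (hWc : Continuous W) (hWpc : Continuous Wp) (hWp : ∀ x, 0 ≤ Wp x)
    (ha_nonneg : ∀ k, k ≠ 0 → 0 ≤ a k) (ha0 : a 0 = 0)
    (ha_sum : Summable a)
    (hdecomp : ∀ x, W x = Wp x + (∑' k : Fin d → ℤ, a k * tcos k x) + 2 * c) :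
    (∀ F : Measure (Torus d), inCone F → c ≤ (1/2) * ∫ x, W x ∂F) ∧
      (∀ ρ : Measure (Torus d), IsProbabilityMeasure ρ → c ≤ energy W ρ) := by
  have ha : ∀ k, 0 ≤ a k := fun k => by
    rcases eq_or_ne k 0 with rfl | hk
    exacts [ha0.ge, ha_nonneg k hk]
  have hF : ∀ F : Measure (Torus d), inCone F → c ≤ (1/2) * ∫ x, W x ∂F := fun F hF =>
    le_half_integral_of_decomposition hF hWc hWpc hWp ha ha_sum hdecomp
  refine ⟨hF, fun ρ _ => ?_⟩
  rw [energy_eq_half_integral_autocorr ρ hWc]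
  exact hF _ (inCone_autocorr ρ)

/-- Proposition 5.1, item 2: if `W` admits an admissible dual decomposition
`W = W⁺ + K + 2c`, then `(1/2) ∫ W dF ≥ c` for every `F` in the relaxed cone `C`; in
particular `c` is a lower bound for the pairwise energy over probability measures. -/
theorem stmt8 {d : ℕ} (W Wp : Torus d → ℝ) (a : (Fin d → ℤ) → ℝ) (c : ℝ)
    (hWc : Continuous W) (hWpc : Continuous Wp) (hWp : ∀ x, 0 ≤ Wp x)
    (ha_symm : ∀ k, a (-k) = a k) (ha_nonneg : ∀ k, k ≠ 0 → 0 ≤ a k) (ha0 : a 0 = 0)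
    (ha_sum : Summable a)
    (hdecomp : ∀ x, W x = Wp x + (∑' k : Fin d → ℤ, a k * tcos k x) + 2 * c) :
    (∀ F : Measure (Torus d), inCone F → c ≤ (1/2) * ∫ x, W x ∂F) ∧
      (∀ ρ : Measure (Torus d), IsProbabilityMeasure ρ → c ≤ energy W ρ) :=
  stmt8_general W Wp a c hWc hWpc hWp ha_nonneg ha0 ha_sum hdecomp
end
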